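/- arXiv:1703.01538 — 4 statements merged into one kernel-verified Lean document; each statement's English description precedes it below -/
import Mathlib

section
/- Let f : [a,b] → ℝ be convex on an open interval containing [a,b], with f' integrable on [a,b]. If f(a)·f(b) > 0 and ∫_a^b f(t) dt = 0, then f(a)·f(b) ≤ ((b-a)/12) · ∫_a^b (f'(x))² dx. -/
/-!
Integrating by parts against the centred weight `x - (a + b) / 2` and using `∫ f = 0` gives
`∫ (x - (a + b) / 2) f' x = (b - a) / 2 * (f a + f b)`. Cauchy–Schwarz, with
`∫ (x - (a + b) / 2) ^ 2 = (b - a) ^ 3 / 12`, then bounds `(f a + f b) ^ 2` by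
`(b - a) / 3 * ∫ f' ^ 2`, and `4 * f a * f b ≤ (f a + f b) ^ 2`.
-/

open MeasureTheory Set

namespace intervalIntegral

variable {a b : ℝ} {g h : ℝ → ℝ}

theorem sq_integral_mul_le_integral_sq_mul_integral_sq (hab : a ≤ b)
    (hgh : IntervalIntegrable (fun x => g x * h x) volume a b)
    (hg2 : IntervalIntegrable (fun x => g x ^ 2) volume a b)
    (hh2 : IntervalIntegrable (fun x => h x ^ 2) volume a b) :
    (∫ x in a..b, g x * h x) ^ 2 ≤ (∫ x in a..b, g x ^ 2) * ∫ x in a..b, h x ^ 2 := by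
  have hquad : ∀ t : ℝ, 0 ≤ (∫ x in a..b, h x ^ 2) * (t * t)
      + 2 * (∫ x in a..b, g x * h x) * t + ∫ x in a..b, g x ^ 2 := by
    intro t
    have hexpand : ∫ x in a..b, (t * h x + g x) ^ 2
        = ∫ x in a..b, ((t * t) * h x ^ 2 + (2 * t) * (g x * h x) + g x ^ 2) :=
      integral_congr fun x _ => by ring
    rw [integral_add ((hh2.const_mul _).add (hgh.const_mul _)) hg2,
      integral_add (hh2.const_mul _) (hgh.const_mul _), integral_const_mul,
      integral_const_mul] at hexpand
    have hnonneg : 0 ≤ ∫ x in a..b, (t * h x + g x) ^ 2 :=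
      integral_nonneg hab fun x _ => sq_nonneg _
    linarith
  have hdiscr := discrim_le_zero hquad
  rw [discrim] at hdiscr
  linarith

end intervalIntegral

open intervalIntegral

theorem integral_sq_sub_midpoint (a b : ℝ) :
    ∫ x in a..b, (x - (a + b) / 2) ^ 2 = (b - a) ^ 3 / 12 := by
  rw [integral_comp_sub_right (fun x => x ^ 2), integral_pow]
  ring

theorem integral_sub_midpoint_mul_deriv {a b : ℝ} {f f' : ℝ → ℝ}
    (hf : ∀ x ∈ uIcc a b, HasDerivAt f (f' x) x) (hf' : IntervalIntegrable f' volume a b) :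
    ∫ x in a..b, (x - (a + b) / 2) * f' x
      = (b - a) / 2 * (f a + f b) - ∫ x in a..b, f x := by
  have hibp := integral_mul_deriv_eq_deriv_mul_of_hasDerivAt
    (u := fun x => x - (a + b) / 2) (v := f)
    (continuous_id.sub continuous_const).continuousOn
    (fun x hx => (hf x hx).continuousAt.continuousWithinAt)
    (fun x _ => (hasDerivAt_id x).sub_const _)
    (fun x hx => hf x (Ioo_subset_Icc_self hx)) intervalIntegrable_const hf'
  simp only [one_mul] at hibp
  rw [hibp]
  ring

theorem alzer_convex_general (a b c d : ℝ) (hab : a < b) (hca : c < a) (hbd : b < d)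
    (f f' : ℝ → ℝ)
    (hderiv : ∀ x ∈ Set.Ioo c d, HasDerivAt f (f' x) x)
    (hint : IntervalIntegrable f' volume a b)
    (hint2 : IntervalIntegrable (fun x => (f' x) ^ 2) volume a b)
    (hzero : (∫ t in a..b, f t) = 0) :
    f a * f b ≤ (b - a) / 12 * ∫ x in a..b, (f' x) ^ 2 := by
  have hderiv' : ∀ x ∈ uIcc a b, HasDerivAt f (f' x) x := fun x hx => by
    rw [uIcc_of_lt hab] at hx
    exact hderiv x ⟨hca.trans_le hx.1, hx.2.trans_lt hbd⟩
  have hweight : Continuous fun x : ℝ => x - (a + b) / 2 := continuous_id.sub continuous_const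
  have hcs := sq_integral_mul_le_integral_sq_mul_integral_sq hab.le
    (hint.continuousOn_mul hweight.continuousOn) ((hweight.pow 2).intervalIntegrable a b) hint2
  rw [integral_sub_midpoint_mul_deriv hderiv' hint, hzero, integral_sq_sub_midpoint] at hcs
  have hba : 0 < (b - a) ^ 2 := by nlinarith
  refine le_of_mul_le_mul_left ?_ hba
  nlinarith [sq_nonneg ((b - a) * (f a - f b))]

theorem alzer_convex (a b c d : ℝ) (hab : a < b) (hca : c < a) (hbd : b < d)
    (f f' : ℝ → ℝ)
    (hconv : ConvexOn ℝ (Set.Ioo c d) f)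
    (hderiv : ∀ x ∈ Set.Ioo c d, HasDerivAt f (f' x) x)
    (hint : IntervalIntegrable f' volume a b)
    (hint2 : IntervalIntegrable (fun x => (f' x) ^ 2) volume a b)
    (hpos : f a * f b > 0)
    (hzero : (∫ t in a..b, f t) = 0) :
    f a * f b ≤ (b - a) / 12 * ∫ x in a..b, (f' x) ^ 2 :=
  alzer_convex_general a b c d hab hca hbd f f' hderiv hint hint2 hzero
end

section
/- The constant 1/12 in the inequality f(a)·f(b) ≤ C·(b-a)·∫_a^b f'² is best possible: for f(x) = 6x² − 6x + 1 on [0,1], f is convex, ∫_0^1 f = 0, f(0) = f(1) = 1, and ∫_0^1 (f'(x))² dx = 12, so f(0)f(1) = (1/12)·∫_0^1 f'². -/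
open MeasureTheory Set

theorem convexOn_quadratic {a : ℝ} (ha : 0 ≤ a) (b c : ℝ) :
    ConvexOn ℝ univ (fun x => a * x ^ 2 + b * x + c) := by
  refine ⟨convex_univ, fun x _ y _ s t hs ht hst => ?_⟩
  obtain rfl : t = 1 - s := by linarith
  simp only [smul_eq_mul]
  -- the convexity defect is `a * s * (1 - s) * (x - y) ^ 2`
  nlinarith [mul_nonneg (mul_nonneg ha (mul_nonneg hs ht)) (sq_nonneg (x - y))]

theorem integral_quadratic (p q r a b : ℝ) :
    ∫ x in a..b, (p * x ^ 2 + q * x + r) =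
      p * (b ^ 3 - a ^ 3) / 3 + q * (b ^ 2 - a ^ 2) / 2 + r * (b - a) := by
  have hderiv : ∀ x, HasDerivAt (fun x => p * x ^ 3 / 3 + q * x ^ 2 / 2 + r * x)
      (p * x ^ 2 + q * x + r) x := by
    intro x
    refine ((((hasDerivAt_pow 3 x).const_mul p).div_const 3).add
      (((hasDerivAt_pow 2 x).const_mul q).div_const 2)).add
      ((hasDerivAt_id' x).const_mul r) |>.congr_deriv ?_
    push_cast
    ring
  rw [intervalIntegral.integral_eq_sub_of_hasDerivAt (fun x _ => hderiv x)
    ((by fun_prop : Continuous fun x : ℝ => p * x ^ 2 + q * x + r).intervalIntegrable a b)]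
  ring

theorem alzer_convex_sharp :
    let f : ℝ → ℝ := fun x => 6 * x ^ 2 - 6 * x + 1
    ConvexOn ℝ (Set.Icc (0:ℝ) 1) f ∧
    (∫ x in (0:ℝ)..1, f x) = 0 ∧
    f 0 = 1 ∧ f 1 = 1 ∧
    (∫ x in (0:ℝ)..1, (6 * (2 * x - 1)) ^ 2) = 12 ∧
    f 0 * f 1 = 1 / 12 * ∫ x in (0:ℝ)..1, (6 * (2 * x - 1)) ^ 2 := by
  intro f
  have hf : f = fun x => 6 * x ^ 2 + (-6) * x + 1 := by funext x; ring
  have hsq : (fun x : ℝ => (6 * (2 * x - 1)) ^ 2) = fun x => 144 * x ^ 2 + (-144) * x + 36 := by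
    funext x; ring
  have hconv : ConvexOn ℝ (Icc (0:ℝ) 1) f :=
    hf ▸ (convexOn_quadratic (by norm_num) _ _).subset (subset_univ _) (convex_Icc 0 1)
  have hint : (∫ x in (0:ℝ)..1, f x) = 0 := by
    rw [hf, integral_quadratic]; norm_num
  have hint_sq : (∫ x in (0:ℝ)..1, (6 * (2 * x - 1)) ^ 2) = 12 := by
    rw [hsq, integral_quadratic]; norm_num
  refine ⟨hconv, hint, by norm_num [f], by norm_num [f], hint_sq, ?_⟩
  rw [hint_sq]
  norm_num [f]
end

section
/- For any a < b, the quadratic function p(x) = 3((2x − a − b)/(b − a))² − 1 satisfies ∫_a^b p(x) dx = 0, p(a) = p(b) = max_{[a,b]} p = 2, and (max_{[a,b]} p)² = ((b-a)/12)·∫_a^b (p'(x))² dx, showing equality in the generalized Alzer inequality. -/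
/-! The affine change of variables `t = (2x - a - b)/(b - a)` maps `[a, b]` onto `[-1, 1]` with
`dx = (b - a)/2 dt`, turns `p` into `3t² - 1` (twice the Legendre polynomial `P₂`) and `p'²` into
`144 t² / (b - a)²`. Everything then reduces to `∫₋₁¹ (3t² - 1) dt = 0`, `∫₋₁¹ t² dt = 2/3` and
`t² ≤ 1` on `[-1, 1]`, with equality at the endpoints. -/

open MeasureTheory Set

noncomputable def centeredCoord (a b x : ℝ) : ℝ := (2 * x - a - b) / (b - a)

section CenteredCoord

variable {a b : ℝ}

lemma centeredCoord_left (hab : a ≠ b) : centeredCoord a b a = -1 := by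
  rw [centeredCoord, div_eq_iff (sub_ne_zero.mpr hab.symm)]
  ring

lemma centeredCoord_right (hab : a ≠ b) : centeredCoord a b b = 1 := by
  rw [centeredCoord, div_eq_iff (sub_ne_zero.mpr hab.symm)]
  ring

lemma sq_centeredCoord_le_one (hab : a < b) {x : ℝ} (hx : x ∈ Icc a b) :
    centeredCoord a b x ^ 2 ≤ 1 := by
  rw [centeredCoord, div_pow, div_le_one (by nlinarith)]
  nlinarith [hx.1, hx.2]

lemma integral_comp_centeredCoord (hab : a ≠ b) (f : ℝ → ℝ) :
    ∫ x in a..b, f (centeredCoord a b x) = (b - a) / 2 * ∫ t in (-1)..1, f t := by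
  have hba : b - a ≠ 0 := sub_ne_zero.mpr hab.symm
  have hc : 2 / (b - a) ≠ 0 := div_ne_zero two_ne_zero hba
  have hcoord : ∀ x, centeredCoord a b x = 2 / (b - a) * x - (a + b) / (b - a) := fun x => by
    rw [centeredCoord]; field_simp; ring
  simp only [hcoord]
  rw [intervalIntegral.integral_comp_mul_sub f hc, ← hcoord, ← hcoord, centeredCoord_left hab,
    centeredCoord_right hab, inv_div, smul_eq_mul]

end CenteredCoord

lemma integral_sq_neg_one_one : ∫ t in (-1 : ℝ)..1, t ^ 2 = 2 / 3 := by
  norm_num [integral_pow]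

lemma integral_three_mul_sq_sub_one : ∫ t in (-1 : ℝ)..1, (3 * t ^ 2 - 1) = 0 := by
  have h3t2 : IntervalIntegrable (fun t : ℝ => 3 * t ^ 2) volume (-1) 1 :=
    (by fun_prop : Continuous fun t : ℝ => 3 * t ^ 2).intervalIntegrable _ _
  rw [intervalIntegral.integral_sub h3t2 intervalIntegrable_const,
    intervalIntegral.integral_const_mul, integral_sq_neg_one_one]
  norm_num

theorem alzer_extremal (a b : ℝ) (hab : a < b) :
    let p : ℝ → ℝ := fun x => 3 * ((2 * x - a - b) / (b - a)) ^ 2 - 1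
    let p' : ℝ → ℝ := fun x => 12 * (2 * x - a - b) / (b - a) ^ 2
    (∫ x in a..b, p x) = 0 ∧
    p a = 2 ∧ p b = 2 ∧ (∀ x ∈ Set.Icc a b, p x ≤ 2) ∧
    (∫ x in a..b, (p' x) ^ 2) = 48 / (b - a) ∧
    (2 : ℝ) ^ 2 = (b - a) / 12 * ∫ x in a..b, (p' x) ^ 2 := by
  intro p p'
  have hba : b - a ≠ 0 := sub_ne_zero.mpr hab.ne'
  have hp : ∀ x, p x = 3 * centeredCoord a b x ^ 2 - 1 := fun _ => rfl
  have hp' : ∀ x, p' x ^ 2 = 144 / (b - a) ^ 2 * centeredCoord a b x ^ 2 := fun x => by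
    simp only [p', centeredCoord]; field_simp; ring
  have hI : ∫ x in a..b, p' x ^ 2 = 48 / (b - a) := by
    simp only [hp']
    rw [integral_comp_centeredCoord hab.ne (fun t => 144 / (b - a) ^ 2 * t ^ 2),
      intervalIntegral.integral_const_mul, integral_sq_neg_one_one]
    field_simp; ring
  refine ⟨?_, ?_, ?_, fun x hx => ?_, hI, ?_⟩
  · simp only [hp]
    rw [integral_comp_centeredCoord hab.ne (fun t => 3 * t ^ 2 - 1),
      integral_three_mul_sq_sub_one, mul_zero]
  · rw [hp, centeredCoord_left hab.ne]; norm_num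
  · rw [hp, centeredCoord_right hab.ne]; norm_num
  · rw [hp]; linarith [sq_centeredCoord_le_one hab hx]
  · rw [hI]; field_simp; norm_num
end

section
/- Let f be a continuously differentiable real function with period 2π such that ∫_0^{2π} f(x) dx = 0. Then (6/π)·max_{0 ≤ x ≤ 2π} f(x)² ≤ ∫_0^{2π} (f'(x))² dx. -/
/-!
Fix `c` and put `h = T / 2`. Integrating by parts on `[c - h, c]` against `s - (c - h)` and on
`[c, c + h]` against `s - (c + h)` gives `2 h f(c) - ∫_{c-h}^{c+h} f = ∫ w f'` for this sawtooth
weight `w`, with `∫ w² = 2 h³ / 3`; Cauchy–Schwarz bounds the square by `(2 h³ / 3) ∫ f'²`.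
For a `T`-periodic `f` of mean zero the left side is `(T f(c))²` and the right side is
`(T³ / 12) ∫_0^T f'²`, so `f(c)² ≤ (T / 12) ∫_0^T f'²`; take `T = 2π`.
-/

open MeasureTheory Set Real

theorem sq_integral_mul_le_integral_sq_mul_integral_sq {α : Type*} [MeasurableSpace α]
    {μ : Measure α} {u v : α → ℝ} (hu : Integrable (fun x => u x ^ 2) μ)
    (hv : Integrable (fun x => v x ^ 2) μ) (huv : Integrable (fun x => u x * v x) μ) :
    (∫ x, u x * v x ∂μ) ^ 2 ≤ (∫ x, u x ^ 2 ∂μ) * ∫ x, v x ^ 2 ∂μ := by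
  have hquad : ∀ t : ℝ, 0 ≤ (∫ x, u x ^ 2 ∂μ) * (t * t) + (-2 * ∫ x, u x * v x ∂μ) * t
      + ∫ x, v x ^ 2 ∂μ := by
    intro t
    have hexpand : ∫ x, (t * u x - v x) ^ 2 ∂μ
        = t ^ 2 * (∫ x, u x ^ 2 ∂μ) - 2 * t * (∫ x, u x * v x ∂μ) + ∫ x, v x ^ 2 ∂μ := by
      have hpt : ∀ x, (t * u x - v x) ^ 2 = t ^ 2 * u x ^ 2 - 2 * t * (u x * v x) + v x ^ 2 :=
        fun x => by ring
      have hcross : Integrable (fun x => t ^ 2 * u x ^ 2 - 2 * t * (u x * v x)) μ :=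
        (hu.const_mul _).sub (huv.const_mul _)
      simp only [hpt]
      rw [integral_add hcross hv,
        integral_sub (hu.const_mul _) (huv.const_mul _), integral_const_mul, integral_const_mul]
    have hnonneg : 0 ≤ ∫ x, (t * u x - v x) ^ 2 ∂μ := integral_nonneg fun x => sq_nonneg _
    linarith
  have hdisc := discrim_le_zero hquad
  rw [discrim] at hdisc
  nlinarith

theorem sq_intervalIntegral_mul_le {u v : ℝ → ℝ} (hu : Continuous u) (hv : Continuous v)
    {a b : ℝ} (hab : a ≤ b) :
    (∫ x in a..b, u x * v x) ^ 2 ≤ (∫ x in a..b, u x ^ 2) * ∫ x in a..b, v x ^ 2 := by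
  simp only [intervalIntegral.integral_of_le hab]
  exact sq_integral_mul_le_integral_sq_mul_integral_sq ((hu.pow 2).intervalIntegrable a b).1
    ((hv.pow 2).intervalIntegrable a b).1 ((hu.mul hv).intervalIntegrable a b).1

theorem integral_sub_const_sq (a b k : ℝ) :
    ∫ s in a..b, (s - k) ^ 2 = ((b - k) ^ 3 - (a - k) ^ 3) / 3 := by
  rw [intervalIntegral.integral_comp_sub_right (fun x => x ^ 2), integral_pow]
  norm_num

theorem sq_integral_sub_const_mul_le {g : ℝ → ℝ} (hg : Continuous g) {a b : ℝ} (hab : a ≤ b)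
    (k : ℝ) :
    (∫ s in a..b, (s - k) * g s) ^ 2
      ≤ ((b - k) ^ 3 - (a - k) ^ 3) / 3 * ∫ s in a..b, g s ^ 2 := by
  rw [← integral_sub_const_sq]
  exact sq_intervalIntegral_mul_le (continuous_sub_right k) hg hab

theorem integral_sub_const_mul_deriv {f f' : ℝ → ℝ} (hf : ∀ x, HasDerivAt f (f' x) x)
    (hf' : Continuous f') (a b k : ℝ) :
    ∫ s in a..b, (s - k) * f' s = (b - k) * f b - (a - k) * f a - ∫ s in a..b, f s := by
  simpa using intervalIntegral.integral_mul_deriv_eq_deriv_mul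
    (fun x _ => (hasDerivAt_id x).sub_const k) (fun x _ => hf x)
    intervalIntegrable_const (hf'.intervalIntegrable a b)

theorem sq_two_mul_sub_integral_le {f f' : ℝ → ℝ} (hf : ∀ x, HasDerivAt f (f' x) x)
    (hf' : Continuous f') (c : ℝ) {h : ℝ} (hh : 0 ≤ h) :
    (2 * h * f c - ∫ x in c - h..c + h, f x) ^ 2
      ≤ 2 * h ^ 3 / 3 * ∫ x in c - h..c + h, f' x ^ 2 := by
  have hcont : Continuous f := continuous_iff_continuousAt.2 fun x => (hf x).continuousAt
  have hleft : (h * f c - ∫ x in c - h..c, f x) ^ 2 ≤ h ^ 3 / 3 * ∫ x in c - h..c, f' x ^ 2 := by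
    have := sq_integral_sub_const_mul_le hf' (show c - h ≤ c by linarith) (c - h)
    rw [integral_sub_const_mul_deriv hf hf'] at this
    convert this using 2 <;> ring
  have hright : (h * f c - ∫ x in c..c + h, f x) ^ 2 ≤ h ^ 3 / 3 * ∫ x in c..c + h, f' x ^ 2 := by
    have := sq_integral_sub_const_mul_le hf' (show c ≤ c + h by linarith) (c + h)
    rw [integral_sub_const_mul_deriv hf hf'] at this
    convert this using 2 <;> ring
  rw [← intervalIntegral.integral_add_adjacent_intervals (b := c) (hcont.intervalIntegrable _ _)
      (hcont.intervalIntegrable _ _),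
    ← intervalIntegral.integral_add_adjacent_intervals (b := c) (f := fun x => f' x ^ 2)
      ((hf'.pow 2).intervalIntegrable _ _) ((hf'.pow 2).intervalIntegrable _ _)]
  nlinarith [sq_nonneg ((h * f c - ∫ x in c - h..c, f x) - (h * f c - ∫ x in c..c + h, f x))]

theorem Function.Periodic.deriv {𝕜 F : Type*} [NontriviallyNormedField 𝕜] [NormedAddCommGroup F]
    [NormedSpace 𝕜 F] {f : 𝕜 → F} {T : 𝕜} (hf : Function.Periodic f T) :
    Function.Periodic (_root_.deriv f) T := fun x => by
  rw [← deriv_comp_add_const, funext hf]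

theorem sq_le_mul_integral_deriv_sq_of_periodic {f : ℝ → ℝ} {T : ℝ} (hf : ContDiff ℝ 1 f)
    (hper : Function.Periodic f T) (hT : 0 < T) (hzero : ∫ x in 0..T, f x = 0) (c : ℝ) :
    f c ^ 2 ≤ T / 12 * ∫ x in 0..T, deriv f x ^ 2 := by
  have hd : ∀ x, HasDerivAt f (deriv f x) x :=
    fun x => ((hf.differentiable one_ne_zero) x).hasDerivAt
  have hshift {g : ℝ → ℝ} (hg : Function.Periodic g T) :
      ∫ x in c - T / 2..c + T / 2, g x = ∫ x in 0..T, g x := by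
    simpa [show c - T / 2 + T = c + T / 2 by ring] using hg.intervalIntegral_add_eq (c - T / 2) 0
  have hderiv_sq : Function.Periodic (fun x => deriv f x ^ 2) T := fun x => by
    simp only [hper.deriv x]
  have hlocal := sq_two_mul_sub_integral_le hd (hf.continuous_deriv le_rfl) c (half_pos hT).le
  rw [hshift hper, hshift hderiv_sq, hzero] at hlocal
  have hscaled : T ^ 2 * f c ^ 2 ≤ T ^ 2 * (T / 12 * ∫ x in 0..T, deriv f x ^ 2) := by
    convert hlocal using 1 <;> ring
  exact le_of_mul_le_mul_left hscaled (by positivity)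

theorem alzer_original (f : ℝ → ℝ)
    (hf : ContDiff ℝ 1 f)
    (hper : Function.Periodic f (2 * π))
    (hzero : (∫ x in (0:ℝ)..(2 * π), f x) = 0) :
    6 / π * sSup ((fun x => (f x) ^ 2) '' Set.Icc 0 (2 * π)) ≤
      ∫ x in (0:ℝ)..(2 * π), (deriv f x) ^ 2 := by
  set I := ∫ x in (0:ℝ)..(2 * π), (deriv f x) ^ 2
  have hbound : ∀ x, f x ^ 2 ≤ π / 6 * I := fun x => by
    have := sq_le_mul_integral_deriv_sq_of_periodic hf hper two_pi_pos hzero x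
    rwa [show 2 * π / 12 = π / 6 by ring] at this
  have hsup : sSup ((fun x => (f x) ^ 2) '' Set.Icc 0 (2 * π)) ≤ π / 6 * I :=
    csSup_le ((nonempty_Icc.2 two_pi_pos.le).image _) (by rintro _ ⟨x, -, rfl⟩; exact hbound x)
  calc 6 / π * sSup ((fun x => (f x) ^ 2) '' Set.Icc 0 (2 * π)) ≤ 6 / π * (π / 6 * I) := by
        gcongr
    _ = I := by field_simp
end
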